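/- Let β > 1 and let m, n be positive integers. Define p = 1/(6(m+n)) and suppose j* is a positive integer with j* ≥ 6(m+n)·max{log n, 2(β-1)}. Then ∑_{j=j*+1}^∞ j^{β-1} · n · (1 - 1/(m+n))^{j/3} ≤ (j*)^β / ((β-1)·n). -/

import Mathlib

/-!
Write `s = j*`, `p = 1/(6(m+n))` and `D = β - 1`, so that `1 - 1/(m+n) = 1 - 6p ≤ e^{-6p}`,
`log n ≤ p s` and `2D ≤ p s`. For a term of index `s + x` with `x ≥ 1`,
`(s + x)^D ≤ s^D e^{D x / s} ≤ s^D e^{p x / 2}`, while `n (1 - 6p)^{(s+x)/3} ≤ n e^{-2ps} e^{-2px}`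
and `n e^{-2ps} ≤ 1/n`. Hence the term is at most `(s^D / n) e^{-px}`, and summing the geometric
series gives `s^D / (n (e^p - 1)) ≤ s^D / (n p) ≤ s^β / (D n)`, the last step being `D ≤ p s`.
-/

open Real

namespace Real

lemma rpow_add_le_rpow_mul_exp {s x D : ℝ} (hs : 0 < s) (hx : 0 ≤ x) (hD : 0 ≤ D) :
    (s + x) ^ D ≤ s ^ D * exp (D / s * x) := by
  have hsplit : s + x = s * (1 + x / s) := by field_simp
  calc (s + x) ^ D = s ^ D * (1 + x / s) ^ D := by
        rw [hsplit, mul_rpow hs.le (by positivity)]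
    _ ≤ s ^ D * exp (x / s) ^ D := by
        gcongr
        linarith [add_one_le_exp (x / s)]
    _ = s ^ D * exp (D / s * x) := by
        rw [← exp_mul]; ring_nf

lemma one_sub_rpow_le_exp_neg_mul {c t : ℝ} (hc : c ≤ 1) (ht : 0 ≤ t) :
    (1 - c) ^ t ≤ exp (-(c * t)) :=
  calc (1 - c) ^ t ≤ exp (-c) ^ t := rpow_le_rpow (by linarith) (one_sub_le_exp_neg c) ht
    _ = exp (-(c * t)) := by rw [← exp_mul]; ring_nf

lemma mul_exp_neg_two_mul_le_inv {n a : ℝ} (hn : 0 < n) (ha : log n ≤ a) :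
    n * exp (-(2 * a)) ≤ n⁻¹ := by
  have hexp : exp (-a) ≤ n⁻¹ := by
    rw [exp_neg]
    exact inv_anti₀ hn (by simpa [exp_log hn] using exp_le_exp.mpr ha)
  calc n * exp (-(2 * a)) = n * exp (-a) ^ 2 := by rw [← exp_nat_mul]; ring_nf
    _ ≤ n * n⁻¹ ^ 2 := by gcongr
    _ = n⁻¹ := by field_simp

lemma hasSum_exp_neg_mul_succ {p : ℝ} (hp : 0 < p) :
    HasSum (fun i : ℕ => exp (-(p * (i + 1)))) (exp p - 1)⁻¹ := by
  have hr1 : exp (-p) < 1 := exp_lt_one_iff.mpr (neg_lt_zero.mpr hp)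
  have hsum : exp (-p) * (1 - exp (-p))⁻¹ = (exp p - 1)⁻¹ := by
    rw [exp_neg]
    have : 1 < exp p := one_lt_exp_iff.mpr hp
    field_simp
  rw [← hsum]
  refine ((hasSum_geometric_of_lt_one (exp_pos _).le hr1).mul_left (exp (-p))).congr_fun fun i => ?_
  rw [← pow_succ', ← exp_nat_mul]; push_cast; ring_nf

end Real

section TailBound

variable {s D p n : ℝ}

lemma rpow_mul_one_sub_rpow_le (hs : 0 < s) (hD : 0 ≤ D) (hp : 0 < p) (hp6 : 6 * p ≤ 1)
    (hn : 0 < n) (hlog : log n ≤ p * s) (hDs : 2 * D ≤ p * s) {x : ℝ} (hx : 0 ≤ x) :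
    (s + x) ^ D * n * (1 - 6 * p) ^ ((s + x) / 3) ≤ s ^ D / n * exp (-(p * x)) := by
  have hDp : D / s * x ≤ p / 2 * x :=
    mul_le_mul_of_nonneg_right ((div_le_iff₀ hs).mpr (by linarith)) hx
  have hsplit : exp (-(6 * p * ((s + x) / 3))) = exp (-(2 * p * x)) * exp (-(2 * (p * s))) := by
    rw [← exp_add]; ring_nf
  have hmerge : exp (D / s * x) * exp (-(2 * p * x)) = exp (D / s * x - 2 * p * x) := by
    rw [← exp_add]; ring_nf
  calc (s + x) ^ D * n * (1 - 6 * p) ^ ((s + x) / 3)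
      ≤ s ^ D * exp (D / s * x) * n * exp (-(6 * p * ((s + x) / 3))) := by
        gcongr
        · exact rpow_add_le_rpow_mul_exp hs hx hD
        · exact one_sub_rpow_le_exp_neg_mul hp6 (by positivity)
    _ = s ^ D * exp (D / s * x - 2 * p * x) * (n * exp (-(2 * (p * s)))) := by
        rw [hsplit, ← hmerge]; ring
    _ ≤ s ^ D * exp (-(p * x)) * n⁻¹ := by
        gcongr
        · linarith [mul_nonneg hp.le hx]
        · exact mul_exp_neg_two_mul_le_inv hn hlog
    _ = s ^ D / n * exp (-(p * x)) := by ring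

lemma tsum_rpow_mul_one_sub_rpow_le (hs : 0 < s) (hD : 0 ≤ D) (hp : 0 < p) (hp6 : 6 * p ≤ 1)
    (hn : 0 < n) (hlog : log n ≤ p * s) (hDs : 2 * D ≤ p * s) :
    ∑' j : ℕ, (s + (j + 1)) ^ D * n * (1 - 6 * p) ^ ((s + (j + 1)) / 3) ≤ s ^ D / (n * p) := by
  have hgeom := (hasSum_exp_neg_mul_succ hp).mul_left (s ^ D / n)
  have hle (j : ℕ) := rpow_mul_one_sub_rpow_le hs hD hp hp6 hn hlog hDs (x := j + 1) (by positivity)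
  have hnonneg (j : ℕ) : 0 ≤ (s + (j + 1)) ^ D * n * (1 - 6 * p) ^ ((s + (j + 1)) / 3) := by
    have : 0 ≤ 1 - 6 * p := by linarith
    positivity
  calc ∑' j : ℕ, (s + (j + 1)) ^ D * n * (1 - 6 * p) ^ ((s + (j + 1)) / 3)
      ≤ s ^ D / n * (exp p - 1)⁻¹ :=
        hasSum_le hle (Summable.of_nonneg_of_le hnonneg hle hgeom.summable).hasSum hgeom
    _ ≤ s ^ D / n * p⁻¹ := by
        gcongr
        linarith [add_one_le_exp p]
    _ = s ^ D / (n * p) := by ring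

end TailBound

theorem stmt5_general (β : ℝ) (hβ : 1 < β) (m n : ℕ) (hn : 0 < n)
    (js : ℕ)
    (h : (js : ℝ) ≥ 6 * (m + n) * max (Real.log n) (2 * (β - 1))) :
    ∑' j : ℕ, (((j + js + 1 : ℕ) : ℝ) ^ (β - 1) * n
        * (1 - 1 / (m + n : ℝ)) ^ (((j + js + 1 : ℕ) : ℝ) / 3))
      ≤ (js : ℝ) ^ β / ((β - 1) * n) := by
  have hn1 : (1 : ℝ) ≤ n := by exact_mod_cast hn
  have hn' : (0 : ℝ) < n := by linarith
  have hN : (1 : ℝ) ≤ m + n := by linarith [m.cast_nonneg (α := ℝ)]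
  set p : ℝ := 1 / (6 * (m + n))
  have hp : 0 < p := by positivity
  have h6p : 6 * p = 1 / (m + n) := by simp only [p]; field_simp
  have hmax : max (log n) (2 * (β - 1)) ≤ p * js := by
    rw [div_mul_eq_mul_div, one_mul, le_div_iff₀ (by positivity), mul_comm]; exact h
  have hDs : 2 * (β - 1) ≤ p * js := (le_max_right _ _).trans hmax
  have hs : (0 : ℝ) < js := pos_of_mul_pos_right (by linarith) hp.le
  calc ∑' j : ℕ, (((j + js + 1 : ℕ) : ℝ) ^ (β - 1) * n
          * (1 - 1 / (m + n : ℝ)) ^ (((j + js + 1 : ℕ) : ℝ) / 3))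
      = ∑' j : ℕ, ((js : ℝ) + (j + 1)) ^ (β - 1) * n
          * (1 - 6 * p) ^ (((js : ℝ) + (j + 1)) / 3) := by
        refine tsum_congr fun j => ?_
        rw [h6p, show ((j + js + 1 : ℕ) : ℝ) = js + (j + 1) by push_cast; ring]
    _ ≤ (js : ℝ) ^ (β - 1) / (n * p) :=
        tsum_rpow_mul_one_sub_rpow_le hs (by linarith) hp
          (by rw [h6p]; exact div_le_one_of_le₀ hN (by linarith)) hn'
          ((le_max_left _ _).trans hmax) hDs
    _ ≤ (js : ℝ) ^ β / ((β - 1) * n) := by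
        have hscale : (β - 1) * ((js : ℝ) ^ (β - 1) * n) ≤ p * js * ((js : ℝ) ^ (β - 1) * n) := by
          gcongr; linarith
        have hsβ : (js : ℝ) ^ β = (js : ℝ) ^ (β - 1) * js := by
          rw [← rpow_add_one hs.ne', sub_add_cancel]
        rw [hsβ, div_le_div_iff₀ (by positivity) (mul_pos (by linarith) hn')]
        linarith

theorem stmt5 (β : ℝ) (hβ : 1 < β) (m n : ℕ) (hm : 0 < m) (hn : 0 < n)
    (js : ℕ) (hjs : 0 < js)
    (h : (js : ℝ) ≥ 6 * (m + n) * max (Real.log n) (2 * (β - 1))) :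
    ∑' j : ℕ, (((j + js + 1 : ℕ) : ℝ) ^ (β - 1) * n
        * (1 - 1 / (m + n : ℝ)) ^ (((j + js + 1 : ℕ) : ℝ) / 3))
      ≤ (js : ℝ) ^ β / ((β - 1) * n) :=
  stmt5_general β hβ m n hn js h
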